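/- arXiv:1009.5842 — 8 statements merged into one kernel-verified Lean document; each statement's English description precedes it below -/
import Mathlib

section
/- The semigroup ℕ ⋊ ℕ^×, with multiplication (l,k)(n,m) = (l + kn, km) where ℕ^× denotes the positive natural numbers acting multiplicatively on the additive monoid ℕ, is right-reversible: for all x, y in ℕ ⋊ ℕ^× the sets (ℕ⋊ℕ^×)x and (ℕ⋊ℕ^×)y have nonempty intersection. -/
/-- Multiplication in the semidirect product `ℕ ⋊ ℕ^×`:
`(l,k)(n,m) = (l + k n, k m)`. -/
def natSdMul (x y : ℕ × ℕ) : ℕ × ℕ := (x.1 + x.2 * y.1, x.2 * y.2)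

/-- The semigroup `ℕ ⋊ ℕ^×` is right-reversible: for all `x, y` the sets
`Px` and `Py` intersect. -/
theorem stmt_3 :
    ∀ x y : ℕ × ℕ, 0 < x.2 → 0 < y.2 →
      ∃ a b : ℕ × ℕ, 0 < a.2 ∧ 0 < b.2 ∧ natSdMul a x = natSdMul b y := by
  intro x y hx hy
  -- both products equal `(x.2 * y.1 + y.2 * x.1, y.2 * x.2)`
  refine ⟨(x.2 * y.1, y.2), (y.2 * x.1, x.2), hy, hx, ?_⟩
  simp only [natSdMul, Prod.mk.injEq]
  constructor <;> ring
end

section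
/- The semigroup ℕ ⋊ ℕ^× is not left-reversible: there exist elements x, y ∈ ℕ ⋊ ℕ^× such that x(ℕ⋊ℕ^×) ∩ y(ℕ⋊ℕ^×) = ∅. Specifically, if (l,k), (n,m) ∈ ℕ ⋊ ℕ^× satisfy that n − l is not congruent to 0 modulo gcd(k,m), then (l,k)(ℕ⋊ℕ^×) ∩ (n,m)(ℕ⋊ℕ^×) = ∅. -/
theorem gcd_dvd_sub_of_natSdMul_eq {l k n m : ℕ} {a b : ℕ × ℕ}
    (h : natSdMul (l, k) a = natSdMul (n, m) b) : (Nat.gcd k m : ℤ) ∣ (n : ℤ) - (l : ℤ) := by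
  have hfst : l + k * a.1 = n + m * b.1 := congrArg Prod.fst h
  have hsub : (n : ℤ) - l = k * a.1 - m * b.1 := by omega
  rw [hsub]
  exact dvd_sub ((Int.natCast_dvd_natCast.2 (Nat.gcd_dvd_left k m)).mul_right _)
    ((Int.natCast_dvd_natCast.2 (Nat.gcd_dvd_right k m)).mul_right _)

theorem natSdMul_ne_of_not_dvd {l k n m : ℕ} (hnd : ¬ ((Nat.gcd k m : ℤ) ∣ (n : ℤ) - (l : ℤ)))
    (a b : ℕ × ℕ) : natSdMul (l, k) a ≠ natSdMul (n, m) b :=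
  fun h => hnd (gcd_dvd_sub_of_natSdMul_eq h)

/-- `ℕ ⋊ ℕ^×` is not left-reversible: if `n - l` is not divisible by
`gcd(k,m)` (in `ℤ`), then `(l,k)P ∩ (n,m)P = ∅`; in particular there exist
`x, y` with `xP ∩ yP = ∅`. -/
theorem stmt_4 :
    (∀ l k n m : ℕ, 0 < k → 0 < m →
      ¬ ((Nat.gcd k m : ℤ) ∣ (n : ℤ) - (l : ℤ)) →
      ∀ a b : ℕ × ℕ, 0 < a.2 → 0 < b.2 →
        natSdMul (l, k) a ≠ natSdMul (n, m) b) ∧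
    (∃ x y : ℕ × ℕ, 0 < x.2 ∧ 0 < y.2 ∧
      ∀ a b : ℕ × ℕ, 0 < a.2 → 0 < b.2 → natSdMul x a ≠ natSdMul y b) :=
  ⟨fun _ _ _ _ _ _ hnd a b _ _ => natSdMul_ne_of_not_dvd hnd a b,
    (0, 2), (1, 2), two_pos, two_pos,
    fun a b _ _ => natSdMul_ne_of_not_dvd (by decide) a b⟩
end

section
/- The semigroup ℤ ⋊ ℕ^× (with multiplication (l,k)(n,m) = (l + kn, km)) is a cancellative right-reversible semigroup. -/
/-- Multiplication in the semidirect product `ℤ ⋊ ℕ^×`: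
`(l,k)(n,m) = (l + k n, k m)`. -/
def intSdMul (x y : ℤ × ℕ) : ℤ × ℕ := (x.1 + (x.2 : ℤ) * y.1, x.2 * y.2)

@[simp]
lemma intSdMul_fst (x y : ℤ × ℕ) : (intSdMul x y).1 = x.1 + (x.2 : ℤ) * y.1 := rfl

@[simp]
lemma intSdMul_snd (x y : ℤ × ℕ) : (intSdMul x y).2 = x.2 * y.2 := rfl

lemma intSdMul_left_cancel {a b c : ℤ × ℕ} (ha : 0 < a.2) (h : intSdMul a b = intSdMul a c) :
    b = c := by
  have ha' : (a.2 : ℤ) ≠ 0 := by exact_mod_cast ha.ne'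
  have h₁ := congrArg Prod.fst h
  have h₂ := congrArg Prod.snd h
  simp only [intSdMul_fst, intSdMul_snd] at h₁ h₂
  exact Prod.ext (mul_left_cancel₀ ha' (add_left_cancel h₁)) (Nat.eq_of_mul_eq_mul_left ha h₂)

lemma intSdMul_right_cancel {a b c : ℤ × ℕ} (ha : 0 < a.2) (h : intSdMul b a = intSdMul c a) :
    b = c := by
  have h₂ : b.2 = c.2 := Nat.eq_of_mul_eq_mul_right ha (congrArg Prod.snd h)
  have h₁ := congrArg Prod.fst h
  simp only [intSdMul_fst, h₂] at h₁
  exact Prod.ext (add_right_cancel h₁) h₂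

/-- The common left multiple witnessing right reversibility: scale `x` by `y.2`, and translate `y`
scaled by `x.2` onto the same point. -/
lemma intSdMul_zero_left_eq (x y : ℤ × ℕ) :
    intSdMul (0, y.2) x = intSdMul ((y.2 : ℤ) * x.1 - x.2 * y.1, x.2) y := by
  ext <;> simp only [intSdMul_fst, intSdMul_snd]
  · ring
  · exact Nat.mul_comm _ _

/-- `ℤ ⋊ ℕ^×` is a cancellative right-reversible semigroup. -/
theorem stmt_5 :
    (∀ a b c : ℤ × ℕ, 0 < a.2 → 0 < b.2 → 0 < c.2 →
      intSdMul a b = intSdMul a c → b = c) ∧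
    (∀ a b c : ℤ × ℕ, 0 < a.2 → 0 < b.2 → 0 < c.2 →
      intSdMul b a = intSdMul c a → b = c) ∧
    (∀ x y : ℤ × ℕ, 0 < x.2 → 0 < y.2 →
      ∃ a b : ℤ × ℕ, 0 < a.2 ∧ 0 < b.2 ∧ intSdMul a x = intSdMul b y) :=
  ⟨fun _ _ _ ha _ _ => intSdMul_left_cancel ha,
    fun _ _ _ ha _ _ => intSdMul_right_cancel ha,
    fun x y hx hy => ⟨(0, y.2), (y.2 * x.1 - x.2 * y.1, x.2), hy, hx, intSdMul_zero_left_eq x y⟩⟩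
end

section
/- If H is a group, M a cancellative right-reversible monoid, and η : M → End(H) an action by injective endomorphisms, then the semidirect product P = H ⋊_η M is a cancellative right-reversible semigroup. -/
/-! Cancellation in `H ⋊_η M` splits into its two coordinates: the `M`-coordinate is a product in
`M`, and once it is cancelled the `H`-coordinate cancels in `H`, using injectivity of `η_m` on the
left. For right reversibility, a common left multiple `a s = b t` in `M` fixes the `M`-coordinates,
and the `H`-coordinate of the second factor is then solved for in the group `H`. -/

namespace SemidirectMonoid

variable {H M : Type*} [Monoid M]

def mul [Monoid H] (η : M →* Monoid.End H) (p q : H × M) : H × M :=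
  (p.1 * η p.2 q.1, p.2 * q.2)

theorem mul_left_cancel [Monoid H] [IsLeftCancelMul H] [IsLeftCancelMul M]
    {η : M →* Monoid.End H} (hinj : ∀ m : M, Function.Injective (η m))
    {a b c : H × M} (h : mul η a b = mul η a c) : b = c := by
  obtain ⟨h1, h2⟩ := Prod.mk.inj h
  exact Prod.ext (hinj a.2 (_root_.mul_left_cancel h1)) (_root_.mul_left_cancel h2)

theorem mul_right_cancel [Monoid H] [IsRightCancelMul H] [IsRightCancelMul M]
    {η : M →* Monoid.End H} {a b c : H × M} (h : mul η b a = mul η c a) : b = c := by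
  obtain ⟨h1, h2⟩ := Prod.mk.inj h
  have hm : b.2 = c.2 := _root_.mul_right_cancel h2
  rw [hm] at h1
  exact Prod.ext (_root_.mul_right_cancel h1) hm

theorem exists_mul_eq_mul [Group H] {η : M →* Monoid.End H}
    (hrev : ∀ s t : M, ∃ a b : M, a * s = b * t) (x y : H × M) :
    ∃ a b : H × M, mul η a x = mul η b y := by
  obtain ⟨a, b, hab⟩ := hrev x.2 y.2
  refine ⟨(1, a), (η a x.1 * (η b y.1)⁻¹, b), ?_⟩
  simp [mul, hab]

end SemidirectMonoid

open SemidirectMonoid in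
/-- If `H` is a group, `M` a cancellative right-reversible monoid and
`η : M → End(H)` an action by injective endomorphisms, then the semidirect
product `P = H ⋊_η M` with multiplication `(h,m)(h',m') = (h η_m(h'), mm')`
is cancellative and right-reversible. -/
theorem stmt_7 {H M : Type*} [Group H] [Monoid M]
    (hcl : ∀ a b c : M, a * b = a * c → b = c)
    (hcr : ∀ a b c : M, b * a = c * a → b = c)
    (hrev : ∀ s t : M, ∃ a b : M, a * s = b * t)
    (η : M →* Monoid.End H) (hinj : ∀ m : M, Function.Injective (η m)) :
    (∀ a b c : H × M,
      (a.1 * η a.2 b.1, a.2 * b.2) = (a.1 * η a.2 c.1, a.2 * c.2) → b = c) ∧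
    (∀ a b c : H × M,
      (b.1 * η b.2 a.1, b.2 * a.2) = (c.1 * η c.2 a.1, c.2 * a.2) → b = c) ∧
    (∀ x y : H × M, ∃ a b : H × M,
      ((a.1 * η a.2 x.1, a.2 * x.2) : H × M) = (b.1 * η b.2 y.1, b.2 * y.2)) := by
  have : IsLeftCancelMul M := ⟨hcl⟩
  have : IsRightCancelMul M := ⟨hcr⟩
  exact ⟨fun _ _ _ ↦ mul_left_cancel hinj, fun _ _ _ ↦ mul_right_cancel,
    exists_mul_eq_mul hrev⟩
end

section
/- The ax+b-group ℚ ⋊ ℚ₊^× over the rationals is the enveloping group of ℤ ⋊ ℕ^×: the natural embedding ι : ℤ ⋊ ℕ^× → ℚ ⋊ ℚ₊^×, (n,m) ↦ (n,m), is an injective semigroup homomorphism, and every element of ℚ ⋊ ℚ₊^× can be written as ι(p)⁻¹ · ι(q) for some p, q ∈ ℤ ⋊ ℕ^×. -/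
/-!
Every element `(a, b)` of `ℚ ⋊ ℚ₊^×` can be put over a common denominator `d ∈ ℕ`,
`(a, b) = (A / d, B / d)` with `A ∈ ℤ`, `B ∈ ℕ`; and left multiplication by
`ι(0, d)⁻¹ = (0, 1/d)` divides both coordinates by `d`, so `(a, b) = ι(0, d)⁻¹ ι(A, B)`.
-/

/-- Multiplication in the `ax+b`-group `ℚ ⋊ ℚ₊^×`: `(a,b)(c,d) = (a + bc, bd)`. -/
def ratAffMul (x y : ℚ × ℚ) : ℚ × ℚ := (x.1 + x.2 * y.1, x.2 * y.2)

/-- Inversion in the `ax+b`-group `ℚ ⋊ ℚ₊^×`: `(a,b)⁻¹ = (−b⁻¹a, b⁻¹)`. -/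
def ratAffInv (x : ℚ × ℚ) : ℚ × ℚ := (-(x.2⁻¹ * x.1), x.2⁻¹)

/-- The natural embedding of `ℤ ⋊ ℕ^×` into `ℚ ⋊ ℚ₊^×`. -/
def iotaZN (x : ℤ × ℕ) : ℚ × ℚ := ((x.1 : ℚ), (x.2 : ℚ))

theorem iotaZN_injective : Function.Injective iotaZN := by
  rintro ⟨m, n⟩ ⟨m', n'⟩ h
  simp only [iotaZN, Prod.mk.injEq, Int.cast_inj, Nat.cast_inj] at h
  rw [h.1, h.2]

theorem iotaZN_intSdMul (x y : ℤ × ℕ) :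
    iotaZN (intSdMul x y) = ratAffMul (iotaZN x) (iotaZN y) := by
  simp only [iotaZN, intSdMul, ratAffMul]
  push_cast
  rfl

theorem ratAffMul_ratAffInv_iotaZN_zero (d : ℕ) (q : ℤ × ℕ) :
    ratAffMul (ratAffInv (iotaZN (0, d))) (iotaZN q) = ((q.1 : ℚ) / d, (q.2 : ℚ) / d) := by
  simp only [ratAffMul, ratAffInv, iotaZN, Int.cast_zero, mul_zero, neg_zero, zero_add]
  rw [inv_mul_eq_div, inv_mul_eq_div]

theorem Rat.exists_eq_div_and_eq_div_of_nonneg (a b : ℚ) (hb : 0 ≤ b) :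
    ∃ (d : ℕ) (A : ℤ) (B : ℕ), 0 < d ∧ a = A / d ∧ b = B / d := by
  refine ⟨a.den * b.den, a.num * b.den, b.num.toNat * a.den, by positivity, ?_, ?_⟩
  · push_cast
    rw [mul_div_mul_right _ _ (by positivity), Rat.num_div_den]
  · have hnum : ((b.num.toNat : ℕ) : ℚ) = b.num := by
      exact_mod_cast Int.toNat_of_nonneg (Rat.num_nonneg.mpr hb)
    push_cast
    rw [hnum, mul_comm (a.den : ℚ),
      mul_div_mul_right _ _ (by positivity), Rat.num_div_den]

/-- `ℚ ⋊ ℚ₊^×` is the enveloping group of `ℤ ⋊ ℕ^×`: `ι` is an injective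
semigroup homomorphism, and every group element is `ι(p)⁻¹ ι(q)`. -/
theorem stmt_9 :
    Function.Injective iotaZN ∧
    (∀ x y : ℤ × ℕ, 0 < x.2 → 0 < y.2 →
      iotaZN (intSdMul x y) = ratAffMul (iotaZN x) (iotaZN y)) ∧
    (∀ g : ℚ × ℚ, 0 < g.2 → ∃ p q : ℤ × ℕ, 0 < p.2 ∧ 0 < q.2 ∧
      ratAffMul (ratAffInv (iotaZN p)) (iotaZN q) = g) := by
  refine ⟨iotaZN_injective, fun x y _ _ => iotaZN_intSdMul x y, ?_⟩
  rintro ⟨a, b⟩ (hb : 0 < b)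
  obtain ⟨d, A, B, hd, rfl, rfl⟩ := Rat.exists_eq_div_and_eq_div_of_nonneg a b hb.le
  have hB : 0 < B := Nat.pos_of_ne_zero (by rintro rfl; simp at hb)
  exact ⟨(0, d), (A, B), hd, hB, ratAffMul_ratAffInv_iotaZN_zero d (A, B)⟩
end

section
/- Let (A, P, α) be a semigroup dynamical system where P is a right-reversible Ore monoid and the crossed product is spanned by monomials: if (π, W) is a covariant representation of (A, P, α) on a Hilbert space H (π a representation of the unital C*-algebra A, W a semigroup homomorphism from P to isometries on H with π(α_p(a)) = W_p π(a) W_p* for all a, p), then the set of products W_p* π(a) W_r for a ∈ A, p, r ∈ P is closed under multiplication up to linear spans; concretely, for any p, r, p', r' ∈ P and a, a' ∈ A, the product (W_p* π(a) W_r)(W_{p'}* π(a') W_{r'}) equals W_q* π(b) W_s for some q, s ∈ P and b ∈ A. -/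
/-!
If `t * r = t' * p'` (such `t, t'` exist by right reversibility), then
`W_r = W_t* W_t' W_p'`, so `W_r W_p'* = W_t* W_t' π(α_p'(1))` because `W_p' W_p'*` is the range
projection `π(α_p'(1))`. Covariance lets `π` commute past `W_t*` and `W_t'` at the cost of
applying `α_t` and `α_t'`, which collects the product into the single monomial
`W_{tp}* π(α_t(a) α_t'(α_p'(1) a')) W_{t'r'}`.
-/

section Covariant

variable {A B P F G : Type*} [Monoid B] [StarMul B] [FunLike F A B] [FunLike G A A]
  {π : F} {α : P → G} {W : P → B}

def monomial (W : P → B) (π : F) (p : P) (a : A) (r : P) : B :=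
  star (W p) * π a * W r

theorem isometry_eq_star_mul_of_mul_eq [Monoid P] (hWmul : ∀ p q, W (p * q) = W p * W q)
    (hWisom : ∀ p, star (W p) * W p = 1) {t r t' p' : P} (h : t * r = t' * p') :
    W r = star (W t) * W t' * W p' := by
  rw [mul_assoc, ← hWmul, ← h, hWmul, ← mul_assoc, hWisom, one_mul]

theorem isometry_mul_map_eq (hWisom : ∀ p, star (W p) * W p = 1)
    (hcov : ∀ p a, π (α p a) = W p * π a * star (W p)) (q : P) (c : A) :
    W q * π c = π (α q c) * W q := by
  rw [hcov, mul_assoc _ (star (W q)), hWisom, mul_one]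

theorem map_mul_star_isometry_eq (hWisom : ∀ p, star (W p) * W p = 1)
    (hcov : ∀ p a, π (α p a) = W p * π a * star (W p)) (q : P) (c : A) :
    π c * star (W q) = star (W q) * π (α q c) := by
  rw [hcov, ← mul_assoc, ← mul_assoc, hWisom, one_mul]

theorem isometry_mul_star_eq_map_one [One A] [OneHomClass F A B]
    (hcov : ∀ p a, π (α p a) = W p * π a * star (W p)) (q : P) :
    W q * star (W q) = π (α q 1) := by
  rw [hcov, map_one, mul_one]

theorem monomial_mul_monomial [MulOneClass A] [MonoidHomClass F A B] [Monoid P]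
    (hWmul : ∀ p q, W (p * q) = W p * W q) (hWisom : ∀ p, star (W p) * W p = 1)
    (hcov : ∀ p a, π (α p a) = W p * π a * star (W p))
    {t t' p r p' r' : P} (h : t * r = t' * p') (a a' : A) :
    monomial W π p a r * monomial W π p' a' r' =
      monomial W π (t * p) (α t a * α t' (α p' 1 * a')) (t' * r') := by
  have hrange : W r * star (W p') = star (W t) * W t' * π (α p' 1) := by
    rw [isometry_eq_star_mul_of_mul_eq hWmul hWisom h, mul_assoc _ (W p'),
      isometry_mul_star_eq_map_one hcov]
  unfold monomial
  calc star (W p) * π a * W r * (star (W p') * π a' * W r')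
      = star (W p) * π a * (W r * star (W p')) * π a' * W r' := by simp only [mul_assoc]
    _ = star (W p) * (π a * star (W t)) * (W t' * π (α p' 1 * a')) * W r' := by
        rw [hrange, map_mul π]; simp only [mul_assoc]
    _ = star (W p) * (star (W t) * π (α t a)) * (π (α t' (α p' 1 * a')) * W t') * W r' := by
        rw [map_mul_star_isometry_eq hWisom hcov, isometry_mul_map_eq hWisom hcov]
    _ = star (W (t * p)) * π (α t a * α t' (α p' 1 * a')) * W (t' * r') := by
        rw [hWmul, hWmul, star_mul, map_mul π]; simp only [mul_assoc]

end Covariant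

theorem stmt_10_general {A : Type*} [NormedRing A] [StarRing A]
    [NormedAlgebra ℂ A]
    {P : Type*} [Monoid P]
    (hrev : ∀ s t : P, ∃ a b : P, a * s = b * t)
    (α : P → A →⋆ₐ[ℂ] A)
    {H : Type*} [NormedAddCommGroup H] [InnerProductSpace ℂ H] [CompleteSpace H]
    (π : A →⋆ₐ[ℂ] (H →L[ℂ] H))
    (W : P → (H →L[ℂ] H))
    (hWmul : ∀ p q : P, W (p * q) = W p * W q)
    (hWisom : ∀ p : P, star (W p) * W p = 1)
    (hcov : ∀ (p : P) (a : A), π (α p a) = W p * π a * star (W p)) :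
    ∀ (p r p' r' : P) (a a' : A), ∃ (q s : P) (b : A),
      (star (W p) * π a * W r) * (star (W p') * π a' * W r') =
        star (W q) * π b * W s := by
  intro p r p' r' a a'
  obtain ⟨t, t', h⟩ := hrev r p'
  exact ⟨_, _, _, monomial_mul_monomial hWmul hWisom hcov h a a'⟩

/-- For a covariant representation `(π, W)` of a semigroup dynamical system
`(A, P, α)` with `P` a right-reversible Ore monoid, the monomials
`W_p* π(a) W_r` are closed under multiplication: any product of two such
monomials is again of this form. -/
theorem stmt_10 {A : Type*} [NormedRing A] [StarRing A] [CStarRing A]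
    [NormedAlgebra ℂ A] [CompleteSpace A] [StarModule ℂ A] [NormOneClass A]
    {P : Type*} [Monoid P]
    (hrev : ∀ s t : P, ∃ a b : P, a * s = b * t)
    (α : P → A →⋆ₐ[ℂ] A) (hα : ∀ p q : P, α (p * q) = (α p).comp (α q))
    {H : Type*} [NormedAddCommGroup H] [InnerProductSpace ℂ H] [CompleteSpace H]
    (π : A →⋆ₐ[ℂ] (H →L[ℂ] H))
    (W : P → (H →L[ℂ] H))
    (hWmul : ∀ p q : P, W (p * q) = W p * W q)
    (hWisom : ∀ p : P, star (W p) * W p = 1)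
    (hcov : ∀ (p : P) (a : A), π (α p a) = W p * π a * star (W p)) :
    ∀ (p r p' r' : P) (a a' : A), ∃ (q s : P) (b : A),
      (star (W p) * π a * W r) * (star (W p') * π a' * W r') =
        star (W q) * π b * W s :=
  stmt_10_general hrev α π W hWmul hWisom hcov
end

section
/- Let G be a group, B a C*-algebra with an action β of G by automorphisms, u : G → U(M(B)) implementing β (so u_g b u_g* = β_g(b)), and let P ⊆ G be a subsemigroup directed under p ≤ r iff r ∈ Pp. Suppose e ∈ B is a projection such that the net (u_p* e u_p)_{p ∈ P} is increasing and ⋃_{p∈P} u_p* e B e u_p is dense in B. Then (u_p* e u_p)_{p∈P} is an approximate unit for B: for every b ∈ B, u_p* e u_p · b → b in norm. -/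
/-!
Since `u_p` is unitary, `f_p = u_p* e u_p` is a projection, so `‖f_p‖ ≤ 1`. Approximate `b` within
`ε / 2` by some `y = u_{p₀}* (e x e) u_{p₀}`; then `f_{p₀} y = y`, and monotonicity of the net gives
`f_p y = f_p f_{p₀} y = f_{p₀} y = y` for `p ≥ p₀`. Hence
`‖f_p b - b‖ ≤ ‖f_p (b - y)‖ + ‖y - b‖ ≤ 2 ‖y - b‖ < ε`.
-/

theorem IsStarProjection.star_mul_mul_of_mul_star_eq_one {R : Type*} [Monoid R] [StarMul R]
    {e u : R} (he : IsStarProjection e) (hu : u * star u = 1) :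
    IsStarProjection (star u * e * u) where
  isIdempotentElem := by
    simp only [IsIdempotentElem, mul_assoc]
    rw [← mul_assoc u, hu, one_mul, ← mul_assoc e e, he.isIdempotentElem.eq]
  isSelfAdjoint := by
    rw [IsSelfAdjoint, star_mul, star_mul, star_star, he.isSelfAdjoint.star_eq, mul_assoc]

theorem star_mul_mul_mul_star_mul_corner_mul {R : Type*} [Monoid R] [StarMul R]
    {e u : R} (he : IsIdempotentElem e) (hu : u * star u = 1) (x : R) :
    star u * e * u * (star u * (e * x * e) * u) = star u * (e * x * e) * u := by
  simp only [mul_assoc]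
  rw [← mul_assoc u, hu, one_mul, ← mul_assoc e e, he.eq]

theorem norm_mul_sub_le_two_mul_of_mul_eq_self {R : Type*} [NonUnitalSeminormedRing R]
    {f y : R} (hf : ‖f‖ ≤ 1) (hfy : f * y = y) (b : R) :
    ‖f * b - b‖ ≤ 2 * ‖y - b‖ :=
  calc ‖f * b - b‖ = ‖f * (b - y) + (y - b)‖ := by rw [mul_sub, hfy, sub_add_sub_cancel]
    _ ≤ ‖f‖ * ‖b - y‖ + ‖y - b‖ := (norm_add_le _ _).trans (by gcongr; exact norm_mul_le _ _)
    _ ≤ 2 * ‖y - b‖ := by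
      rw [norm_sub_rev b y]
      nlinarith [norm_nonneg (y - b)]

theorem stmt_11_general {A : Type*} [NormedRing A] [StarRing A] [CStarRing A]
    [NormedAlgebra ℂ A] [StarModule ℂ A]
    (B : StarSubalgebra ℂ A)
    {G : Type*} [Group G]
    (u : G → A) (huU : ∀ g : G, u g * star (u g) = 1 ∧ star (u g) * u g = 1)
    (Pc : Submonoid G)
    (e : A) (heproj : e * e = e ∧ star e = e)
    (hmono : ∀ p r : Pc, (∃ q : Pc, (r : G) = q * p) →
      (star (u r) * e * u r) * (star (u p) * e * u p) = star (u p) * e * u p)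
    (hdense : ∀ b : A, b ∈ B → ∀ ε : ℝ, 0 < ε →
      ∃ (p : Pc) (x : A), x ∈ B ∧
        ‖star (u p) * (e * x * e) * u p - b‖ < ε) :
    ∀ b : A, b ∈ B → ∀ ε : ℝ, 0 < ε → ∃ p₀ : Pc, ∀ p : Pc,
      (∃ q : Pc, (p : G) = q * p₀) →
      ‖(star (u p) * e * u p) * b - b‖ < ε := by
  intro b hb ε hε
  obtain ⟨p₀, x, -, hx⟩ := hdense b hb (ε / 2) (half_pos hε)
  refine ⟨p₀, fun p hp => ?_⟩
  have he : IsStarProjection e := isStarProjection_iff'.mpr heproj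
  have hcorner := star_mul_mul_mul_star_mul_corner_mul he.isIdempotentElem (huU p₀).1 x
  have hfixed : star (u p) * e * u p * (star (u p₀) * (e * x * e) * u p₀) =
      star (u p₀) * (e * x * e) * u p₀ := by
    rw [← hcorner, ← mul_assoc, hmono p₀ p hp]
  calc _ ≤ 2 * ‖star (u p₀) * (e * x * e) * u p₀ - b‖ :=
        norm_mul_sub_le_two_mul_of_mul_eq_self
          (IsStarProjection.norm_le _ (he.star_mul_mul_of_mul_star_eq_one (huU p).1)) hfixed b
    _ < ε := by linarith

/-- Abstract version of Lemma `approx_unit`: `B` is a C*-algebra sitting as a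
subalgebra of a unital C*-algebra `A` (playing the role of `M(B)`), `G` a
group acting by automorphisms `β` implemented by unitaries `u : G → A`, and
`P ⊆ G` a subsemigroup directed under `p ≤ r ↔ r ∈ Pp`.  If `e ∈ B` is a
projection such that the net `(u_p* e u_p)_{p ∈ P}` is increasing and
`⋃_{p ∈ P} u_p* e B e u_p` is dense in `B`, then `(u_p* e u_p)` is an
approximate unit: `u_p* e u_p · b → b` for every `b ∈ B`. -/
theorem stmt_11 {A : Type*} [NormedRing A] [StarRing A] [CStarRing A]
    [NormedAlgebra ℂ A] [CompleteSpace A] [StarModule ℂ A] [NormOneClass A]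
    (B : StarSubalgebra ℂ A) (hBclosed : IsClosed (B : Set A))
    {G : Type*} [Group G]
    (β : G → (A ≃⋆ₐ[ℂ] A))
    (hβmul : ∀ (g h : G) (a : A), β (g * h) a = β g (β h a))
    (hβB : ∀ (g : G) (b : A), b ∈ B → β g b ∈ B)
    (u : G → A) (huU : ∀ g : G, u g * star (u g) = 1 ∧ star (u g) * u g = 1)
    (huβ : ∀ (g : G) (b : A), b ∈ B → u g * b * star (u g) = β g b)
    (Pc : Submonoid G)
    (hdir : ∀ p r : Pc, ∃ s : Pc, (∃ q : Pc, (s : G) = q * p) ∧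
      (∃ q : Pc, (s : G) = q * r))
    (e : A) (heB : e ∈ B) (heproj : e * e = e ∧ star e = e)
    (hmono : ∀ p r : Pc, (∃ q : Pc, (r : G) = q * p) →
      (star (u r) * e * u r) * (star (u p) * e * u p) = star (u p) * e * u p)
    (hdense : ∀ b : A, b ∈ B → ∀ ε : ℝ, 0 < ε →
      ∃ (p : Pc) (x : A), x ∈ B ∧
        ‖star (u p) * (e * x * e) * u p - b‖ < ε) :
    ∀ b : A, b ∈ B → ∀ ε : ℝ, 0 < ε → ∃ p₀ : Pc, ∀ p : Pc,
      (∃ q : Pc, (p : G) = q * p₀) →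
      ‖(star (u p) * e * u p) * b - b‖ < ε :=
  stmt_11_general B u huU Pc e heproj hmono hdense
end

section
/- Let R be an integral domain with quotient field Q(R), and let Q(R)^× denote the multiplicative group of nonzero elements of Q(R). The ax+b-group Q(R) ⋊ Q(R)^× is generated as a group by the image of R ⋊ R^× under the natural embedding ι, and every element of Q(R) ⋊ Q(R)^× can be written as ι(p)⁻¹ ι(q) with p, q ∈ R ⋊ R^×. -/
/-- Multiplication in the `ax+b`-group over a field `K`. -/
def affMul {K : Type*} [Field K] (x y : K × K) : K × K :=
  (x.1 + x.2 * y.1, x.2 * y.2)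

/-- Inversion in the `ax+b`-group over a field `K`. -/
def affInv {K : Type*} [Field K] (x : K × K) : K × K :=
  (-(x.2⁻¹ * x.1), x.2⁻¹)

/-- For an integral domain `R` with quotient field `Q(R)`, every element of
the `ax+b`-group `Q(R) ⋊ Q(R)^×` is of the form `ι(p)⁻¹ ι(q)` with
`p, q ∈ R ⋊ R^×`, where `ι(n,m) = (n/1, m/1)`. -/
theorem stmt_16 {R : Type*} [CommRing R] [IsDomain R] :
    ∀ g : FractionRing R × FractionRing R, g.2 ≠ 0 →
      ∃ p q : R × R, p.2 ≠ 0 ∧ q.2 ≠ 0 ∧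
        affMul
          (affInv (algebraMap R (FractionRing R) p.1,
                   algebraMap R (FractionRing R) p.2))
          (algebraMap R (FractionRing R) q.1,
           algebraMap R (FractionRing R) q.2) = g := by
  rintro ⟨a, b⟩ hb
  obtain ⟨x, s, hsmem, ha⟩ := IsFractionRing.div_surjective (A := R) a
  obtain ⟨y, t, htmem, hbeq⟩ := IsFractionRing.div_surjective (A := R) b
  have hs : s ≠ 0 := nonZeroDivisors.ne_zero hsmem
  have ht : t ≠ 0 := nonZeroDivisors.ne_zero htmem
  have hy : y ≠ 0 := by
    rintro rfl
    simp at hbeq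
    exact hb hbeq.symm
  set f := algebraMap R (FractionRing R)
  have hfs : f s ≠ 0 := fun h => hs ((IsFractionRing.to_map_eq_zero_iff (K := FractionRing R)).mp h)
  have hft : f t ≠ 0 := fun h => ht ((IsFractionRing.to_map_eq_zero_iff (K := FractionRing R)).mp h)
  refine ⟨(0, s * t), (x * t, y * s), mul_ne_zero hs ht, mul_ne_zero hy hs, ?_⟩
  simp only [affMul, affInv, Prod.mk.injEq, map_mul, map_zero]
  constructor
  · rw [← ha]
    field_simp
    ring
  · rw [← hbeq]
    field_simp
end
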